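/- arXiv:1012.0621 — 4 statements merged into one kernel-verified Lean document; each statement's English description precedes it below -/
import Mathlib

section
/- Let ||·||_A be a norm on R^p with unit ball conv(A), let Φ : R^p → R^n be a linear map, and let x* ∈ R^p with y = Φx*. Define the tangent cone T_A(x*) = cone{z - x* : ||z||_A ≤ ||x*||_A}. Then x* is the unique minimizer of ||x||_A subject to Φx = y if and only if null(Φ) ∩ T_A(x*) = {0}. -/
/-!
A nonzero vector of `null(Φ) ∩ T_A(x*)` is a positive multiple of some `z - x*` with `Φ z = Φ x*`,
`z ≠ x*` and `‖z‖_A ≤ ‖x*‖_A`, i.e. a competing feasible point; conversely such a competitor `z`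
gives the nonzero vector `z - x*` of the intersection (take `t = 1`).
-/

open Set

section DescentCone

variable (𝕜 : Type*) {E F β : Type*} [Field 𝕜] [LinearOrder 𝕜]
  [AddCommGroup E] [Module 𝕜 E] [AddCommGroup F] [Module 𝕜 F] [Preorder β]

def descentCone (f : E → β) (x : E) : Set E :=
  {d | ∃ t : 𝕜, 0 ≤ t ∧ ∃ z, f z ≤ f x ∧ d = t • (z - x)}

variable {𝕜}

theorem zero_mem_descentCone (f : E → β) (x : E) : (0 : E) ∈ descentCone 𝕜 f x :=
  ⟨0, le_rfl, x, le_rfl, by rw [zero_smul]⟩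

variable [IsStrictOrderedRing 𝕜]

theorem sub_mem_descentCone {f : E → β} {x z : E} (hz : f z ≤ f x) :
    z - x ∈ descentCone 𝕜 f x :=
  ⟨1, zero_le_one, z, hz, (one_smul 𝕜 _).symm⟩

theorem ker_inter_descentCone_eq_zero_iff (Φ : E →ₗ[𝕜] F) (f : E → β) (x : E) :
    (LinearMap.ker Φ : Set E) ∩ descentCone 𝕜 f x = {0} ↔
      ∀ z, Φ z = Φ x → f z ≤ f x → z = x := by
  constructor
  · intro hcap z hΦz hz
    have hsub : z - x ∈ (LinearMap.ker Φ : Set E) ∩ descentCone 𝕜 f x :=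
      ⟨by simp [hΦz], sub_mem_descentCone hz⟩
    rw [hcap, mem_singleton_iff, sub_eq_zero] at hsub
    exact hsub
  · intro hmin
    refine Subset.antisymm ?_ (singleton_subset_iff.mpr ⟨Φ.map_zero, zero_mem_descentCone f x⟩)
    rintro _ ⟨hker, t, -, z, hz, rfl⟩
    rcases eq_or_ne t 0 with rfl | ht
    · exact zero_smul 𝕜 _
    · have hΦz : Φ z = Φ x := by
        rwa [SetLike.mem_coe, Submodule.smul_mem_iff _ ht, LinearMap.mem_ker, map_sub,
          sub_eq_zero] at hker
      simp [hmin z hΦz hz]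

end DescentCone

theorem exact_recovery_iff_nullspace_misses_tangent_cone_general {p n : ℕ}
    (f : EuclideanSpace ℝ (Fin p) → ℝ)
    (Φ : EuclideanSpace ℝ (Fin p) →ₗ[ℝ] EuclideanSpace ℝ (Fin n))
    (xstar : EuclideanSpace ℝ (Fin p))
    (T : Set (EuclideanSpace ℝ (Fin p)))
    (hT : T = {d | ∃ t : ℝ, 0 ≤ t ∧ ∃ z, f z ≤ f xstar ∧ d = t • (z - xstar)}) :
    (∀ x, Φ x = Φ xstar → x ≠ xstar → f xstar < f x) ↔
      (LinearMap.ker Φ : Set (EuclideanSpace ℝ (Fin p))) ∩ T = {0} := by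
  rw [show T = descentCone ℝ f xstar from hT, ker_inter_descentCone_eq_zero_iff]
  exact forall_congr' fun x => imp_congr_right fun _ => by
    rw [← not_le, not_imp_comm, not_not]

/-- Let `‖·‖_A = f` be a norm on `ℝ^p` whose unit ball is `conv(A)`,
`Φ : ℝ^p → ℝ^n` linear, `y = Φ x*`, and let
`T_A(x*) = cone{z - x* : f z ≤ f x*}` be the tangent cone.  Then `x*` is the unique
minimizer of `f` subject to `Φ x = y` iff `null(Φ) ∩ T_A(x*) = {0}`. -/
theorem exact_recovery_iff_nullspace_misses_tangent_cone {p n : ℕ}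
    (A : Set (EuclideanSpace ℝ (Fin p))) (f : EuclideanSpace ℝ (Fin p) → ℝ)
    (hball : {x | f x ≤ 1} = convexHull ℝ A)
    (htri : ∀ x y, f (x + y) ≤ f x + f y)
    (hhom : ∀ (c : ℝ) (x : EuclideanSpace ℝ (Fin p)), f (c • x) = |c| * f x)
    (hdef : ∀ x, f x = 0 → x = 0)
    (Φ : EuclideanSpace ℝ (Fin p) →ₗ[ℝ] EuclideanSpace ℝ (Fin n))
    (xstar : EuclideanSpace ℝ (Fin p))
    (T : Set (EuclideanSpace ℝ (Fin p)))
    (hT : T = {d | ∃ t : ℝ, 0 ≤ t ∧ ∃ z, f z ≤ f xstar ∧ d = t • (z - xstar)}) :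
    (∀ x, Φ x = Φ xstar → x ≠ xstar → f xstar < f x) ↔
      (LinearMap.ker Φ : Set (EuclideanSpace ℝ (Fin p))) ∩ T = {0} :=
  exact_recovery_iff_nullspace_misses_tangent_cone_general f Φ xstar T hT
end

section
/- Let ||·||_A be a norm on R^p, T_A(x*) its tangent cone at x*, Φ : R^p → R^n a linear map, and suppose ||Φz|| ≥ ε||z|| for all z ∈ T_A(x*), where ε > 0. Given y = Φx* + ω with ||ω|| ≤ δ, any minimizer x̂ of ||x||_A subject to ||y − Φx|| ≤ δ satisfies ||x̂ − x*|| ≤ 2δ/ε. -/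
/-! Since `x*` is itself feasible, the minimizer satisfies `f x̂ ≤ f x*`, so `x̂ - x*` lies in the
tangent cone. Both `x̂` and `x*` are within `δ` of `y` after applying `Φ`, hence
`‖Φ (x̂ - x*)‖ ≤ 2δ`, and the gain condition turns this into `ε ‖x̂ - x*‖ ≤ 2δ`. -/

theorem norm_map_sub_le_of_norm_sub_le {F G 𝓕 : Type*} [AddCommGroup F]
    [SeminormedAddCommGroup G] [FunLike 𝓕 F G] [AddMonoidHomClass 𝓕 F G] (Φ : 𝓕)
    {a b : F} {y : G} {δa δb : ℝ} (ha : ‖y - Φ a‖ ≤ δa) (hb : ‖y - Φ b‖ ≤ δb) :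
    ‖Φ (a - b)‖ ≤ δa + δb := by
  have hsplit : Φ (a - b) = (y - Φ b) - (y - Φ a) := by
    rw [map_sub]; abel
  calc ‖Φ (a - b)‖ ≤ ‖y - Φ b‖ + ‖y - Φ a‖ := hsplit ▸ norm_sub_le _ _
    _ ≤ δa + δb := by linarith

theorem robust_recovery_error_bound_general {p n : ℕ}
    (f : EuclideanSpace ℝ (Fin p) → ℝ)
    (Φ : EuclideanSpace ℝ (Fin p) →ₗ[ℝ] EuclideanSpace ℝ (Fin n))
    (xstar xhat ω y : _) (ε δ : ℝ) (hε : 0 < ε)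
    (T : Set (EuclideanSpace ℝ (Fin p)))
    (hT : T = {d | ∃ t : ℝ, 0 ≤ t ∧ ∃ z, f z ≤ f xstar ∧ d = t • (z - xstar)})
    (hgain : ∀ z ∈ T, ε * ‖z‖ ≤ ‖Φ z‖)
    (hy : y = Φ xstar + ω) (hω : ‖ω‖ ≤ δ)
    (hfeas : ‖y - Φ xhat‖ ≤ δ)
    (hopt : ∀ x, ‖y - Φ x‖ ≤ δ → f xhat ≤ f x) :
    ‖xhat - xstar‖ ≤ 2 * δ / ε := by
  have hstar : ‖y - Φ xstar‖ ≤ δ := by simpa [hy] using hω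
  have hcone : xhat - xstar ∈ T :=
    hT ▸ ⟨1, zero_le_one, xhat, hopt xstar hstar, (one_smul ℝ _).symm⟩
  have hΦ : ‖Φ (xhat - xstar)‖ ≤ δ + δ := norm_map_sub_le_of_norm_sub_le Φ hfeas hstar
  rw [le_div_iff₀ hε, mul_comm]
  linarith [hgain _ hcone]

/-- Robust recovery.  If `f` is a norm on `ℝ^p` with tangent cone
`T = cone{z - x* : f z ≤ f x*}` at `x*`, the linear map `Φ` satisfies the minimum
gain condition `‖Φ z‖ ≥ ε ‖z‖` on `T` with `ε > 0`, and `y = Φ x* + ω` with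
`‖ω‖ ≤ δ`, then any minimizer `x̂` of `f` over `{x : ‖y - Φ x‖ ≤ δ}` satisfies
`‖x̂ - x*‖ ≤ 2δ/ε`. -/
theorem robust_recovery_error_bound {p n : ℕ}
    (f : EuclideanSpace ℝ (Fin p) → ℝ)
    (htri : ∀ x y, f (x + y) ≤ f x + f y)
    (hhom : ∀ (c : ℝ) (x : EuclideanSpace ℝ (Fin p)), f (c • x) = |c| * f x)
    (hdef : ∀ x, f x = 0 → x = 0)
    (Φ : EuclideanSpace ℝ (Fin p) →ₗ[ℝ] EuclideanSpace ℝ (Fin n))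
    (xstar xhat ω y : _) (ε δ : ℝ) (hε : 0 < ε) (hδ : 0 ≤ δ)
    (T : Set (EuclideanSpace ℝ (Fin p)))
    (hT : T = {d | ∃ t : ℝ, 0 ≤ t ∧ ∃ z, f z ≤ f xstar ∧ d = t • (z - xstar)})
    (hgain : ∀ z ∈ T, ε * ‖z‖ ≤ ‖Φ z‖)
    (hy : y = Φ xstar + ω) (hω : ‖ω‖ ≤ δ)
    (hfeas : ‖y - Φ xhat‖ ≤ δ)
    (hopt : ∀ x, ‖y - Φ x‖ ≤ δ → f xhat ≤ f x) :
    ‖xhat - xstar‖ ≤ 2 * δ / ε :=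
  robust_recovery_error_bound_general f Φ xstar xhat ω y ε δ hε T hT hgain hy hω hfeas hopt
end

section
/- For any point g ∈ R^p and any nonempty closed convex cone C ⊆ R^p with polar C*, the supremum of ⟨g, z⟩ over z ∈ C ∩ B(0,1) (the intersection of C with the closed unit ball) equals dist(g, C*) = inf_{u∈C*} ||g − u||. -/
/-!
Let `v` be the metric projection of `g` onto `C`. Because `C` is a cone, the variational
inequality characterising `v` splits into `⟪g - v, v⟫ = 0` and `g - v ∈ C*` (Moreau's
decomposition). Weak duality `⟪g, z⟫ ≤ ‖g - u‖` holds for every `z ∈ C ∩ B(0,1)` and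
`u ∈ C*`, and the pair `z = v / ‖v‖`, `u = g - v` attains it with common value `‖v‖`.
-/

open MeasureTheory Real

/-- The polar cone `C* = {x : ⟨x, z⟩ ≤ 0 for all z ∈ C}`. -/
def polarCone {p : ℕ} (C : Set (EuclideanSpace ℝ (Fin p))) :
    Set (EuclideanSpace ℝ (Fin p)) :=
  {x | ∀ z ∈ C, (inner ℝ x z : ℝ) ≤ 0}

open scoped RealInnerProductSpace

section ConeDuality

variable {E : Type*} [NormedAddCommGroup E] [InnerProductSpace ℝ E]

lemma real_inner_le_norm_sub_of_inner_nonpos {g u z : E} (huz : ⟪u, z⟫ ≤ 0) (hz : ‖z‖ ≤ 1) :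
    ⟪g, z⟫ ≤ ‖g - u‖ :=
  calc ⟪g, z⟫ = ⟪g - u, z⟫ + ⟪u, z⟫ := by rw [inner_sub_left, sub_add_cancel]
    _ ≤ ‖g - u‖ * ‖z‖ := by linarith [real_inner_le_norm (g - u) z]
    _ ≤ ‖g - u‖ := mul_le_of_le_one_right (norm_nonneg _) hz

lemma exists_moreau_decomposition {C : Set E} (hne : C.Nonempty) (hconv : Convex ℝ C)
    (hcomplete : IsComplete C) (hcone : ∀ t : ℝ, 0 ≤ t → ∀ x ∈ C, t • x ∈ C) (g : E) :
    ∃ v ∈ C, (∀ z ∈ C, ⟪g - v, z⟫ ≤ 0) ∧ ⟪g - v, v⟫ = 0 := by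
  obtain ⟨v, hvC, hv⟩ := exists_norm_eq_iInf_of_complete_convex hne hcomplete hconv g
  have hvar := (norm_eq_iInf_iff_real_inner_le_zero hconv hvC).mp hv
  -- test the variational inequality against `0 = 0 • v` and `2 • v`
  have hzero : ⟪g - v, 0 - v⟫ ≤ 0 := by simpa using hvar _ (hcone 0 le_rfl v hvC)
  have htwo : ⟪g - v, (2 : ℝ) • v - v⟫ ≤ 0 := hvar _ (hcone 2 zero_le_two v hvC)
  rw [zero_sub, inner_neg_right] at hzero
  rw [two_smul, add_sub_cancel_right] at htwo
  have horth : ⟪g - v, v⟫ = 0 := by linarith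
  refine ⟨v, hvC, fun z hz => ?_, horth⟩
  simpa [inner_sub_right, horth] using hvar z hz

lemma exists_inner_eq_norm_sub_of_mem_cone {C : Set E} (hne : C.Nonempty)
    (hconv : Convex ℝ C) (hcomplete : IsComplete C)
    (hcone : ∀ t : ℝ, 0 ≤ t → ∀ x ∈ C, t • x ∈ C) (g : E) :
    ∃ z ∈ C, ‖z‖ ≤ 1 ∧ ∃ u, (∀ w ∈ C, ⟪u, w⟫ ≤ 0) ∧ ⟪g, z⟫ = ‖g - u‖ := by
  obtain ⟨v, hvC, hpolar, horth⟩ := exists_moreau_decomposition hne hconv hcomplete hcone g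
  have hgv : ⟪g, v⟫ = ‖v‖ ^ 2 := by
    rw [inner_sub_left, real_inner_self_eq_norm_sq] at horth
    linarith
  -- `‖v‖⁻¹ = 0` when `v = 0`, so `z = 0` needs no separate case
  refine ⟨‖v‖⁻¹ • v, hcone _ (inv_nonneg.mpr (norm_nonneg v)) v hvC, ?_, g - v, hpolar, ?_⟩
  · rw [norm_smul, norm_inv, norm_norm]
    exact inv_mul_le_one
  · rw [real_inner_smul_right, hgv, sub_sub_cancel]
    field_simp

end ConeDuality

/-- For any `g ∈ ℝ^p` and any nonempty closed convex cone `C ⊆ ℝ^p`,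
`sup { ⟨g, z⟩ : z ∈ C ∩ B(0,1) } = dist(g, C*)`, where `B(0,1)` is the closed unit
ball and `C*` is the polar cone. -/
theorem sup_inner_cone_ball_eq_dist_polar {p : ℕ}
    (C : Set (EuclideanSpace ℝ (Fin p)))
    (hne : C.Nonempty) (hconv : Convex ℝ C) (hclosed : IsClosed C)
    (hcone : ∀ (t : ℝ), 0 ≤ t → ∀ x ∈ C, t • x ∈ C)
    (g : EuclideanSpace ℝ (Fin p)) :
    sSup ((fun z => (inner ℝ g z : ℝ)) '' (C ∩ Metric.closedBall 0 1)) =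
      Metric.infDist g (polarCone C) := by
  obtain ⟨z, hzC, hz1, u, hu, hzu⟩ :=
    exists_inner_eq_norm_sub_of_mem_cone hne hconv hclosed.isComplete hcone g
  have hsup : IsGreatest ((fun z => ⟪g, z⟫) '' (C ∩ Metric.closedBall 0 1)) ‖g - u‖ := by
    refine ⟨⟨z, ⟨hzC, mem_closedBall_zero_iff.mpr hz1⟩, hzu⟩, ?_⟩
    rintro _ ⟨y, ⟨hyC, hy1⟩, rfl⟩
    exact real_inner_le_norm_sub_of_inner_nonpos (hu y hyC) (mem_closedBall_zero_iff.mp hy1)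
  have hdist : Metric.infDist g (polarCone C) = ‖g - u‖ := by
    refine le_antisymm (dist_eq_norm g u ▸ Metric.infDist_le_dist_of_mem hu) ?_
    refine (Metric.le_infDist (s := polarCone C) ⟨u, hu⟩).mpr fun u' hu' => ?_
    rw [dist_eq_norm, ← hzu]
    exact real_inner_le_norm_sub_of_inner_nonpos (hu' z hzC) hz1
  rw [hsup.csSup_eq, hdist]
end

section
/- For a standard Gaussian random variable g ∼ N(0,1) and t > 0, the expected squared soft-thresholding satisfies E[shrink(g,t)²] ≤ (2/√(2π)) · (1/t) · exp(−t²/2), where shrink(z,t) = z + t for z < −t, 0 for |z| ≤ t, and z − t for z > t. -/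
/-!
Since `shrink g t ^ 2 = (|g| - t)₊ ^ 2`, the symmetry of the Gaussian density reduces the
expectation to `2 / √(2π) * ∫_t^∞ (x - t)² exp (-x²/2) dx`. Integrating by parts and using the
Mills-ratio tail bound combine into a single comparison: `F x = -(x - t + 1/t) exp (-x²/2)`
tends to `0` at infinity and `F' x = exp (-x²/2) ((x - t)² + (x - t) (t + 1/t))`, which dominates
the integrand on `(t, ∞)`, so the tail integral is at most `-F t = exp (-t²/2) / t`.
-/

open MeasureTheory ProbabilityTheory Real

/-- The soft-thresholding (shrinkage) operator with threshold `t`. -/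
noncomputable def shrink (z t : ℝ) : ℝ :=
  if z < -t then z + t else if z ≤ t then 0 else z - t

open Set Filter Topology

lemma shrink_sq_eq_indicator (z : ℝ) {t : ℝ} (ht : 0 ≤ t) :
    shrink z t ^ 2 = (Ioi t).indicator (fun y => (y - t) ^ 2) |z| := by
  unfold shrink
  split_ifs with h₁ h₂
  · rw [abs_of_neg (by linarith), indicator_of_mem (mem_Ioi.2 (by linarith))]
    ring
  · rw [indicator_of_notMem (by rw [mem_Ioi, not_lt, abs_le]; constructor <;> linarith)]
    ring
  · rw [abs_of_pos (by linarith), indicator_of_mem (mem_Ioi.2 (by linarith))]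

theorem integral_Ioi_le_of_hasDerivAt_of_le {f F F' : ℝ → ℝ} {a m : ℝ}
    (hcont : ContinuousWithinAt F (Ici a) a) (hderiv : ∀ x ∈ Ioi a, HasDerivAt F (F' x) x)
    (hf : ∀ x ∈ Ioi a, 0 ≤ f x) (hfF' : ∀ x ∈ Ioi a, f x ≤ F' x)
    (hF : Tendsto F atTop (𝓝 m)) :
    ∫ x in Ioi a, f x ≤ m - F a := by
  have hF' : ∀ x ∈ Ioi a, 0 ≤ F' x := fun x hx => (hf x hx).trans (hfF' x hx)
  rw [← integral_Ioi_of_hasDerivAt_of_nonneg hcont hderiv hF' hF]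
  exact integral_mono_of_nonneg (ae_restrict_of_forall_mem measurableSet_Ioi hf)
    (integrableOn_Ioi_deriv_of_nonneg hcont hderiv hF' hF)
    (ae_restrict_of_forall_mem measurableSet_Ioi hfF')

lemma tendsto_add_const_mul_exp_neg_sq_div_two (c : ℝ) :
    Tendsto (fun x => (x + c) * exp (-x ^ 2 / 2)) atTop (𝓝 0) := by
  have h s := (tendsto_rpow_abs_mul_exp_neg_mul_sq_cocompact one_half_pos s).mono_left
    atTop_le_cocompact
  have := (h 1).add ((h 0).const_mul c)
  rw [mul_zero, add_zero] at this
  refine this.congr' ?_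
  filter_upwards [eventually_ge_atTop 0] with x hx
  rw [abs_of_nonneg hx, rpow_one, rpow_zero]
  ring_nf

lemma setIntegral_Ioi_exp_neg_sq_div_two_mul_sq_sub_le {t : ℝ} (ht : 0 < t) :
    ∫ x in Ioi t, exp (-x ^ 2 / 2) * (x - t) ^ 2 ≤ exp (-t ^ 2 / 2) / t := by
  set F : ℝ → ℝ := fun x => -((x + (1 / t - t)) * exp (-x ^ 2 / 2))
  have hderiv x : HasDerivAt F (exp (-x ^ 2 / 2) * ((x - t + 1 / t) * x - 1)) x := by
    have hexp : HasDerivAt (fun y : ℝ => -y ^ 2 / 2) (-x) x :=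
      ((hasDerivAt_pow 2 x).fun_neg.div_const 2).congr_deriv (by push_cast; ring)
    exact (((hasDerivAt_id' x).add_const (1 / t - t)).fun_mul hexp.exp).fun_neg.congr_deriv
      (by ring)
  have hgap x (hx : x ∈ Ioi t) : (x - t) ^ 2 ≤ (x - t + 1 / t) * x - 1 := by
    have hxt : 0 ≤ x - t := sub_nonneg.2 (le_of_lt hx)
    have : (x - t + 1 / t) * x - 1 = (x - t) ^ 2 + (x - t) * (t + 1 / t) := by
      field_simp
      ring
    linarith [mul_nonneg hxt (by positivity : 0 ≤ t + 1 / t)]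
  have key : ∫ x in Ioi t, exp (-x ^ 2 / 2) * (x - t) ^ 2 ≤ 0 - F t :=
    integral_Ioi_le_of_hasDerivAt_of_le (hderiv t).continuousAt.continuousWithinAt
      (fun x _ => hderiv x) (fun x _ => by positivity)
      (fun x hx => mul_le_mul_of_nonneg_left (hgap x hx) (exp_pos _).le)
      (by simpa [F] using (tendsto_add_const_mul_exp_neg_sq_div_two (1 / t - t)).neg)
  convert key using 1
  simp only [F]
  field_simp
  ring

/-- For a standard Gaussian `g ∼ N(0,1)` and `t > 0`,
`E[shrink(g,t)²] ≤ (2/√(2π)) (1/t) exp(-t²/2)`. -/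
theorem expected_sq_shrink_le (t : ℝ) (ht : 0 < t) :
    ∫ g, (shrink g t) ^ 2 ∂(gaussianReal 0 1) ≤
      (2 / Real.sqrt (2 * π)) * (1 / t) * Real.exp (-t ^ 2 / 2) := by
  set f := (Ioi t).indicator fun y => (√(2 * π))⁻¹ * exp (-y ^ 2 / 2) * (y - t) ^ 2
  have hpoint x : gaussianPDFReal 0 1 x • shrink x t ^ 2 = f |x| := by
    simp [f, shrink_sq_eq_indicator x ht.le, indicator_mul_right, gaussianPDFReal_def, sq_abs]
  calc ∫ g, shrink g t ^ 2 ∂gaussianReal 0 1 = ∫ x, f |x| := by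
        rw [integral_gaussianReal_eq_integral_smul one_ne_zero]
        exact integral_congr_ae (Eventually.of_forall hpoint)
    _ = 2 / √(2 * π) * ∫ x in Ioi t, exp (-x ^ 2 / 2) * (x - t) ^ 2 := by
        rw [integral_comp_abs, setIntegral_indicator measurableSet_Ioi, Ioi_inter_Ioi,
          max_eq_right ht.le]
        simp only [mul_assoc, integral_const_mul]
        ring
    _ ≤ 2 / √(2 * π) * (exp (-t ^ 2 / 2) / t) := by
        gcongr
        exact setIntegral_Ioi_exp_neg_sq_div_two_mul_sq_sub_le ht
    _ = _ := by ring
end
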